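/- There exists a rotation system ρ on the complete graph K_{17} with exactly 85 faces, of which 83 have length 3, one has length 6, and one has length 17, such that the dual graph of (K_{17}, ρ) is simple and the face of length 17 is a cutface. In particular the genus of (K_{17}, ρ) is 18 = γ(K_{17}) + 2. -/

import Mathlib

namespace DualSep

open SimpleGraph

variable {V : Type*} [Fintype V] [DecidableEq V]

/-- The dart-reversal permutation of a simple graph. -/
def dartRev (G : SimpleGraph V) : Equiv.Perm G.Dart :=
  Function.Involutive.toPerm SimpleGraph.Dart.symm SimpleGraph.Dart.symm_involutive

/-- `ρ` is a rotation system on `G`: it permutes the darts, preserves the initial vertex of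
each dart, and the darts leaving any fixed vertex form a single orbit. -/
structure IsRotationSystem (G : SimpleGraph V) (ρ : Equiv.Perm G.Dart) : Prop where
  fst_fixed : ∀ d : G.Dart, (ρ d).fst = d.fst
  single_orbit : ∀ d d' : G.Dart, d.fst = d'.fst → ∃ n : ℕ, (ρ ^ n) d = d'

/-- The face permutation `φ = ρ ∘ rev` of a rotation system. -/
def facePerm {G : SimpleGraph V} (ρ : Equiv.Perm G.Dart) : Equiv.Perm G.Dart :=
  ρ * dartRev G

/-- The face (orbit of the face permutation) containing a given dart. -/
def faceOf {G : SimpleGraph V} (ρ : Equiv.Perm G.Dart) (d : G.Dart) : Set G.Dart :=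
  {d' | (facePerm ρ).SameCycle d d'}

/-- The set of faces of `(G, ρ)`. -/
def faces {G : SimpleGraph V} (ρ : Equiv.Perm G.Dart) : Set (Set G.Dart) :=
  Set.range (faceOf ρ)

/-- The dual graph is simple: no dual edge joins a face to itself, and no two distinct
faces are joined by more than one dual edge. -/
def DualSimple {G : SimpleGraph V} (ρ : Equiv.Perm G.Dart) : Prop :=
  (∀ d : G.Dart, faceOf ρ d ≠ faceOf ρ d.symm) ∧
  (∀ d d' : G.Dart, d.edge ≠ d'.edge →
    ¬(faceOf ρ d = faceOf ρ d' ∧ faceOf ρ d.symm = faceOf ρ d'.symm) ∧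
    ¬(faceOf ρ d = faceOf ρ d'.symm ∧ faceOf ρ d.symm = faceOf ρ d'))

/-- The dual graph of `(G, ρ)`, as a simple graph on the set of faces: two distinct faces
are adjacent when some edge of `G` induces a dual edge between them. -/
def dualGraph {G : SimpleGraph V} (ρ : Equiv.Perm G.Dart) : SimpleGraph (faces ρ) where
  Adj F₁ F₂ := F₁ ≠ F₂ ∧
    ∃ d : G.Dart, faceOf ρ d = (F₁ : Set G.Dart) ∧ faceOf ρ d.symm = (F₂ : Set G.Dart)
  symm := by
    refine ⟨?_⟩
    rintro F₁ F₂ ⟨hne, d, h1, h2⟩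
    exact ⟨hne.symm, d.symm, h2, by rwa [SimpleGraph.Dart.symm_symm]⟩
  loopless := by refine ⟨?_⟩; rintro F ⟨hne, -⟩; exact hne rfl

/-- `C` is a cutface: a face whose removal disconnects the dual graph. -/
def IsCutface {G : SimpleGraph V} (ρ : Equiv.Perm G.Dart) (C : Set G.Dart) : Prop :=
  C ∈ faces ρ ∧
    ¬((dualGraph ρ).induce {F : faces ρ | (F : Set G.Dart) ≠ C}).Connected

end DualSep

/-! The rotation system is given by the cyclic order of the neighbours around each vertex. Its faces
are certified by a labelling of the darts by `Fin 85` that is invariant under the face permutation,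
together with one representative dart per label from which every dart carrying that label is
reached within 17 steps of the face permutation; the faces are then exactly the label classes.
Face lengths (all triangles except the hexagon `33` and the 17-gon `75`), simplicity of the dual
and the separating property of the 17-gon thus become finite checks on pairs of vertices: no dual
edge avoiding face `75` joins one of the faces `77, …, 84` to one of the others. Euler's formula
gives `17 - 136 + 85 = 2 - 2 · 18`. -/

open Equiv Equiv.Perm

namespace Equiv.Perm

variable {α ι : Type*} {σ : Perm α} {f : α → ι}

theorem SameCycle.eq_of_invariant (hf : ∀ x, f (σ x) = f x) {x y : α}
    (h : σ.SameCycle x y) : f x = f y := by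
  obtain ⟨n, rfl⟩ := h
  induction n using Int.induction_on with
  | zero => rfl
  | succ n ih => rw [add_comm, zpow_add, zpow_one, mul_apply, hf, ih]
  | pred n ih =>
    rw [sub_eq_neg_add, zpow_add, zpow_neg_one, mul_apply, ih]
    simpa only [coe_inv, apply_symm_apply] using hf (σ⁻¹ ((σ ^ (-n : ℤ)) x))

theorem sameCycle_iff_eq_of_invariant (hf : ∀ x, f (σ x) = f x) (rep : ι → α)
    (hrep : ∀ x, σ.SameCycle (rep (f x)) x) {x y : α} : σ.SameCycle x y ↔ f x = f y :=
  ⟨SameCycle.eq_of_invariant hf, fun h => (hrep x).symm.trans (h ▸ hrep y)⟩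

end Equiv.Perm

namespace SimpleGraph

theorem Reachable.apply_eq_of_adj {W β : Type*} {H : SimpleGraph W} {f : W → β}
    (hf : ∀ x y, H.Adj x y → f x = f y) {x y : W} (h : H.Reachable x y) : f x = f y := by
  obtain ⟨w⟩ := h
  induction w with
  | nil => rfl
  | cons hadj _ ih => exact (hf _ _ hadj).trans ih

theorem ncard_setOf_dart {V : Type*} {G : SimpleGraph V} (P : V × V → Prop) :
    {d : G.Dart | P d.toProd}.ncard = {p : V × V | G.Adj p.1 p.2 ∧ P p}.ncard := by
  rw [← Set.ncard_image_of_injective _ Dart.toProd_injective]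
  congr 1
  ext p
  constructor
  · rintro ⟨d, hd, rfl⟩
    exact ⟨d.adj, hd⟩
  · rintro ⟨hadj, hp⟩
    exact ⟨⟨p, hadj⟩, hp, rfl⟩

end SimpleGraph

namespace DualSep

open SimpleGraph

variable {V ι : Type*} {G : SimpleGraph V}

section Rotation

variable (σ : V → Perm V) (hσ : ∀ v u, G.Adj v (σ v u) ↔ G.Adj v u)

def rotationOfPerms : Perm G.Dart where
  toFun d := ⟨(d.fst, σ d.fst d.snd), (hσ _ _).mpr d.adj⟩
  invFun d := ⟨(d.fst, (σ d.fst)⁻¹ d.snd), (hσ _ _).mp (by simp [d.adj])⟩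
  left_inv d := Dart.ext _ _ (by simp)
  right_inv d := Dart.ext _ _ (by simp)

theorem toProd_rotationOfPerms_pow_apply (n : ℕ) (d : G.Dart) :
    ((rotationOfPerms σ hσ ^ n) d).toProd = (d.fst, (σ d.fst ^ n) d.snd) := by
  induction n with
  | zero => rfl
  | succ n ih =>
    have h₁ : ((rotationOfPerms σ hσ ^ n) d).fst = d.fst := (Prod.ext_iff.mp ih).1
    have h₂ : ((rotationOfPerms σ hσ ^ n) d).snd = (σ d.fst ^ n) d.snd := (Prod.ext_iff.mp ih).2
    rw [pow_succ', mul_apply, pow_succ', mul_apply]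
    exact Prod.ext h₁ (by rw [← h₂, ← h₁]; rfl)

theorem isRotationSystem_rotationOfPerms
    (hcycle : ∀ v u w, G.Adj v u → G.Adj v w → ∃ n : ℕ, (σ v ^ n) u = w) :
    IsRotationSystem G (rotationOfPerms σ hσ) where
  fst_fixed _ := rfl
  single_orbit d d' h := by
    obtain ⟨n, hn⟩ := hcycle d.fst d.snd d'.snd d.adj (h ▸ d'.adj)
    exact ⟨n, Dart.ext _ _ (by rw [toProd_rotationOfPerms_pow_apply, hn, h])⟩

variable [DecidableEq V] (rot : V → List V) (hrot : ∀ v u, G.Adj v u ↔ u ∈ rot v)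

def rotationOfCyclicOrders : Perm G.Dart :=
  rotationOfPerms (fun v => (rot v).formPerm) fun v u => by
    rw [hrot, hrot, List.formPerm_mem_iff_mem]

theorem isRotationSystem_rotationOfCyclicOrders (hnodup : ∀ v, (rot v).Nodup) :
    IsRotationSystem G (rotationOfCyclicOrders rot hrot) :=
  isRotationSystem_rotationOfPerms _ _ fun v u w hu hw =>
    (hnodup v).isCycleOn_formPerm.exists_pow_eq' (List.finite_toSet _) ((hrot v u).mp hu)
      ((hrot v w).mp hw)

end Rotation

def IsFaceLabelling (ρ : Perm G.Dart) (lab : G.Dart → ι) : Prop :=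
  ∀ d d', (facePerm ρ).SameCycle d d' ↔ lab d = lab d'

namespace IsFaceLabelling

variable {ρ : Perm G.Dart} {lab : G.Dart → ι}

theorem faceOf_eq (h : IsFaceLabelling ρ lab) (d : G.Dart) : faceOf ρ d = lab ⁻¹' {lab d} := by
  ext d'
  exact (h d d').trans eq_comm

theorem faceOf_eq_faceOf_iff (h : IsFaceLabelling ρ lab) {d d' : G.Dart} :
    faceOf ρ d = faceOf ρ d' ↔ lab d = lab d' := by
  rw [h.faceOf_eq, h.faceOf_eq]
  exact ⟨fun e => (Set.ext_iff.mp e d).mp rfl, fun e => by rw [e]⟩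

theorem faces_eq (h : IsFaceLabelling ρ lab) (hs : Function.Surjective lab) :
    faces ρ = Set.range fun i => lab ⁻¹' {i} := by
  ext F
  constructor
  · rintro ⟨d, rfl⟩
    exact ⟨lab d, (h.faceOf_eq d).symm⟩
  · rintro ⟨i, rfl⟩
    obtain ⟨d, rfl⟩ := hs i
    exact ⟨d, h.faceOf_eq d⟩

theorem injective_preimage_singleton (hs : Function.Surjective lab) :
    Function.Injective fun i => lab ⁻¹' {i} :=
  hs.preimage_injective.comp Set.singleton_injective

theorem ncard_faces (h : IsFaceLabelling ρ lab) (hs : Function.Surjective lab) :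
    (faces ρ).ncard = Nat.card ι := by
  rw [h.faces_eq hs, Set.ncard_range_of_injective (injective_preimage_singleton hs)]

theorem ncard_faces_ncard_eq (h : IsFaceLabelling ρ lab) (hs : Function.Surjective lab)
    (k : ℕ) : {F ∈ faces ρ | F.ncard = k}.ncard = {i | (lab ⁻¹' {i}).ncard = k}.ncard := by
  rw [← Set.ncard_image_of_injective _ (injective_preimage_singleton hs), h.faces_eq hs]
  congr 1
  ext F
  constructor
  · rintro ⟨⟨i, rfl⟩, hk⟩
    exact ⟨i, hk, rfl⟩
  · rintro ⟨i, hk, rfl⟩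
    exact ⟨⟨i, rfl⟩, hk⟩

theorem dualSimple (h : IsFaceLabelling ρ lab) (hloop : ∀ d, lab d ≠ lab d.symm)
    (hinj : ∀ d d', lab d = lab d' → lab d.symm = lab d'.symm → d = d') : DualSimple ρ := by
  simp only [DualSimple, ne_eq, h.faceOf_eq_faceOf_iff]
  refine ⟨hloop, fun d d' hne => ⟨fun ⟨h₁, h₂⟩ => hne (by rw [hinj d d' h₁ h₂]), ?_⟩⟩
  rintro ⟨h₁, h₂⟩
  rw [hinj d d'.symm h₁ (by rwa [Dart.symm_symm]), Dart.edge_symm] at hne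
  exact hne rfl

theorem isCutface (h : IsFaceLabelling ρ lab) (hs : Function.Surjective lab) {c i j : ι}
    (S : Set ι) (hS : ∀ d, lab d ≠ c → lab d.symm ≠ c → (lab d ∈ S ↔ lab d.symm ∈ S))
    (hi : i ∈ S) (hj : j ∉ S) (hic : i ≠ c) (hjc : j ≠ c) : IsCutface ρ (lab ⁻¹' {c}) := by
  obtain ⟨dc, rfl⟩ := hs c
  obtain ⟨di, rfl⟩ := hs i
  obtain ⟨dj, rfl⟩ := hs j
  refine ⟨⟨dc, h.faceOf_eq dc⟩, fun hconn => ?_⟩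
  let side (F : {F : faces ρ | (F : Set G.Dart) ≠ lab ⁻¹' {lab dc}}) : Prop :=
    ∃ d ∈ (F : Set G.Dart), lab d ∈ S
  have side_iff (F) (d : G.Dart) (hF : (F.1 : Set G.Dart) = faceOf ρ d) : side F ↔ lab d ∈ S := by
    refine ⟨fun ⟨d', hd', hd'S⟩ => ?_, fun hd => ⟨d, hF ▸ SameCycle.refl _ d, hd⟩⟩
    rw [hF, h.faceOf_eq] at hd'
    rwa [← hd']
  have side_eq_of_adj (F F') (hadj : ((dualGraph ρ).induce _).Adj F F') : side F = side F' := by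
    obtain ⟨-, d, hd, hd'⟩ := hadj
    have hdc : lab d ≠ lab dc := fun e => F.2 (hd.symm.trans (by rw [h.faceOf_eq, e]))
    have hdc' : lab d.symm ≠ lab dc := fun e => F'.2 (hd'.symm.trans (by rw [h.faceOf_eq, e]))
    exact propext <| (side_iff F d hd.symm).trans <|
      (hS d hdc hdc').trans (side_iff F' d.symm hd'.symm).symm
  have hne (d : G.Dart) (hd : lab d ≠ lab dc) : faceOf ρ d ≠ lab ⁻¹' {lab dc} := by
    rw [h.faceOf_eq]
    exact fun e => hd (injective_preimage_singleton hs e)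
  have key := (hconn.preconnected ⟨⟨_, di, rfl⟩, hne di hic⟩
    ⟨⟨_, dj, rfl⟩, hne dj hjc⟩).apply_eq_of_adj side_eq_of_adj
  rw [side_iff _ di rfl, side_iff _ dj rfl] at key
  exact hj (key ▸ hi)

end IsFaceLabelling

end DualSep

namespace K17

open SimpleGraph DualSep

def rot : Fin 17 → List (Fin 17) :=
  ![[1, 4, 9, 7, 10, 8, 11, 5, 16, 3, 13, 15, 6, 14, 2, 12],
    [0, 12, 3, 11, 9, 2, 13, 8, 6, 15, 5, 10, 16, 7, 14, 4],
    [0, 14, 5, 15, 3, 6, 11, 7, 13, 1, 9, 4, 16, 8, 10, 12],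
    [0, 16, 9, 5, 4, 14, 11, 1, 12, 6, 10, 7, 2, 15, 8, 13],
    [0, 1, 14, 3, 5, 7, 11, 8, 12, 15, 13, 10, 6, 16, 2, 9],
    [0, 11, 13, 6, 4, 3, 9, 8, 7, 12, 10, 1, 15, 2, 14, 16],
    [0, 15, 1, 8, 9, 11, 2, 5, 13, 7, 16, 4, 10, 3, 12, 14],
    [0, 9, 15, 12, 5, 8, 14, 1, 16, 6, 13, 2, 11, 4, 3, 10],
    [0, 10, 2, 16, 14, 7, 5, 9, 6, 1, 13, 3, 15, 12, 4, 11],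
    [0, 4, 2, 1, 11, 6, 8, 5, 3, 16, 10, 14, 13, 12, 15, 7],
    [0, 7, 3, 6, 4, 13, 11, 15, 14, 9, 16, 1, 5, 12, 2, 8],
    [0, 8, 4, 7, 2, 6, 9, 1, 3, 14, 12, 16, 15, 10, 13, 5],
    [0, 2, 10, 5, 7, 15, 4, 8, 9, 13, 16, 11, 14, 6, 3, 1],
    [0, 3, 8, 1, 2, 7, 6, 5, 11, 16, 12, 9, 14, 10, 4, 15],
    [0, 6, 12, 13, 9, 10, 15, 11, 3, 4, 1, 7, 8, 16, 5, 2],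
    [0, 13, 4, 12, 7, 9, 14, 10, 11, 16, 8, 3, 2, 5, 1, 6],
    [0, 5, 14, 8, 2, 4, 6, 7, 1, 10, 15, 11, 12, 13, 9, 3]]

-- Diagonal entries are placeholders.
def faceLabel (p : Fin 17 × Fin 17) : Fin 85 :=
  ![![0, 0, 1, 2, 3, 4, 5, 6, 7, 8, 9, 10, 11, 12, 13, 14, 15],
    ![3, 0, 16, 17, 18, 19, 20, 21, 22, 23, 24, 25, 0, 26, 27, 28, 29],
    ![11, 26, 0, 30, 31, 32, 33, 34, 35, 16, 36, 37, 38, 39, 1, 40, 41],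
    ![12, 25, 33, 0, 42, 43, 44, 45, 46, 47, 48, 49, 17, 50, 51, 30, 2],
    ![8, 3, 41, 51, 0, 42, 52, 33, 53, 31, 54, 55, 56, 57, 18, 58, 59],
    ![15, 24, 40, 42, 33, 0, 60, 61, 62, 43, 63, 4, 64, 65, 32, 19, 66],
    ![13, 28, 37, 48, 59, 33, 0, 67, 20, 68, 52, 69, 44, 60, 70, 5, 71],
    ![9, 27, 39, 33, 55, 64, 71, 0, 61, 6, 45, 34, 72, 67, 73, 74, 21],
    ![10, 20, 36, 50, 56, 61, 68, 73, 0, 62, 7, 53, 75, 22, 76, 46, 35],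
    ![6, 16, 31, 43, 8, 62, 69, 74, 68, 0, 75, 23, 77, 78, 79, 75, 47],
    ![7, 29, 38, 45, 52, 24, 48, 9, 36, 79, 0, 75, 63, 54, 80, 81, 75],
    ![4, 23, 34, 25, 53, 65, 37, 55, 10, 69, 81, 0, 75, 75, 49, 82, 83],
    ![0, 17, 11, 44, 58, 63, 70, 64, 56, 75, 38, 83, 0, 77, 75, 72, 84],
    ![14, 22, 26, 12, 54, 60, 67, 39, 50, 77, 75, 65, 84, 0, 78, 57, 75],
    ![1, 18, 32, 49, 51, 66, 13, 27, 73, 78, 79, 75, 70, 75, 0, 80, 76],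
    ![5, 19, 30, 46, 57, 40, 28, 72, 75, 74, 80, 81, 58, 14, 75, 0, 82],
    ![2, 21, 35, 47, 41, 15, 59, 71, 76, 75, 29, 82, 83, 84, 66, 75, 0]] p.1 p.2

def faceRep : Fin 85 → Fin 17 × Fin 17 :=
  ![(0, 1), (0, 2), (0, 3), (0, 4), (0, 5), (0, 6), (0, 7), (0, 8), (0, 9), (0, 10), (0, 11),
    (0, 12), (0, 13), (0, 14), (0, 15), (0, 16), (1, 2), (1, 3), (1, 4), (1, 5), (1, 6), (1, 7),
    (1, 8), (1, 9), (1, 10), (1, 11), (1, 13), (1, 14), (1, 15), (1, 16), (2, 3), (2, 4), (2, 5),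
    (2, 6), (2, 7), (2, 8), (2, 10), (2, 11), (2, 12), (2, 13), (2, 15), (2, 16), (3, 4), (3, 5),
    (3, 6), (3, 7), (3, 8), (3, 9), (3, 10), (3, 11), (3, 13), (3, 14), (4, 6), (4, 8), (4, 10),
    (4, 11), (4, 12), (4, 13), (4, 15), (4, 16), (5, 6), (5, 7), (5, 8), (5, 10), (5, 12),
    (5, 13), (5, 16), (6, 7), (6, 9), (6, 11), (6, 14), (6, 16), (7, 12), (7, 14), (7, 15),
    (8, 12), (8, 14), (9, 12), (9, 13), (9, 14), (10, 14), (10, 15), (11, 15), (11, 16),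
    (12, 16)]

set_option maxRecDepth 10000

def facePair (p : Fin 17 × Fin 17) : Fin 17 × Fin 17 := (p.2, (rot p.2).formPerm p.1)

def faceLength (i : Fin 85) : ℕ := if i = 33 then 6 else if i = 75 then 17 else 3

theorem ne_iff_mem_rot : ∀ v u : Fin 17, v ≠ u ↔ u ∈ rot v := by decide

theorem nodup_rot : ∀ v, (rot v).Nodup := by decide

theorem faceRep_fst_ne_snd : ∀ i, (faceRep i).1 ≠ (faceRep i).2 := by decide

theorem faceLabel_faceRep : ∀ i, faceLabel (faceRep i) = i := by decide

theorem faceLabel_facePair : ∀ u v : Fin 17, u ≠ v →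
    faceLabel (facePair (u, v)) = faceLabel (u, v) := by
  decide

theorem exists_facePair_iterate_faceRep_eq : ∀ u v : Fin 17, u ≠ v →
    ∃ n < 17, facePair^[n] (faceRep (faceLabel (u, v))) = (u, v) := by
  decide

theorem card_faceLabel_eq : ∀ i,
    (Finset.univ.filter fun p : Fin 17 × Fin 17 => p.1 ≠ p.2 ∧ faceLabel p = i).card =
      faceLength i := by
  decide

theorem faceLabel_ne_faceLabel_swap : ∀ u v : Fin 17, u ≠ v →
    faceLabel (u, v) ≠ faceLabel (v, u) := by
  decide

theorem facePair_iterate_eq_of_faceLabel_swap_eq : ∀ i, ∀ m < 17, ∀ n < 17,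
    faceLabel (facePair^[m] (faceRep i)).swap = faceLabel (facePair^[n] (faceRep i)).swap →
      facePair^[m] (faceRep i) = facePair^[n] (faceRep i) := by
  decide

theorem le_faceLabel_iff_le_faceLabel_swap : ∀ u v : Fin 17, u ≠ v →
    faceLabel (u, v) ≠ 75 → faceLabel (v, u) ≠ 75 →
      (77 ≤ faceLabel (u, v) ↔ 77 ≤ faceLabel (v, u)) := by
  decide

def rho : Perm (⊤ : SimpleGraph (Fin 17)).Dart :=
  rotationOfCyclicOrders rot fun v u => (top_adj v u).trans (ne_iff_mem_rot v u)

def dartLabel (d : (⊤ : SimpleGraph (Fin 17)).Dart) : Fin 85 := faceLabel d.toProd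

def repDart (i : Fin 85) : (⊤ : SimpleGraph (Fin 17)).Dart := ⟨faceRep i, faceRep_fst_ne_snd i⟩

theorem toProd_facePerm_rho_pow (n : ℕ) (d : (⊤ : SimpleGraph (Fin 17)).Dart) :
    ((facePerm rho ^ n) d).toProd = facePair^[n] d.toProd := by
  rw [coe_pow]
  exact Function.Semiconj.iterate_right (f := Dart.toProd) (fun _ => rfl) n d

theorem isFaceLabelling_dartLabel : IsFaceLabelling rho dartLabel := fun _ _ =>
  sameCycle_iff_eq_of_invariant (fun d => faceLabel_facePair d.fst d.snd d.adj) repDart fun d => by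
    obtain ⟨n, -, hn⟩ := exists_facePair_iterate_faceRep_eq d.fst d.snd d.adj
    exact ⟨n, by rw [zpow_natCast]; exact Dart.ext _ _ (by rw [toProd_facePerm_rho_pow]; exact hn)⟩

theorem dartLabel_surjective : Function.Surjective dartLabel :=
  fun i => ⟨repDart i, faceLabel_faceRep i⟩

theorem ncard_dartLabel_preimage (i : Fin 85) : (dartLabel ⁻¹' {i}).ncard = faceLength i := by
  rw [← card_faceLabel_eq, ← Set.ncard_coe_finset, Finset.coe_filter]
  simp only [Finset.mem_univ, true_and]
  exact ncard_setOf_dart fun p => faceLabel p = i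

theorem ncard_faces_ncard_eq (k : ℕ) :
    {F ∈ faces rho | F.ncard = k}.ncard = (Finset.univ.filter fun i => faceLength i = k).card := by
  rw [isFaceLabelling_dartLabel.ncard_faces_ncard_eq dartLabel_surjective]
  simp_rw [ncard_dartLabel_preimage]
  rw [← Set.ncard_coe_finset, Finset.coe_filter]
  simp

theorem dualSimple_rho : DualSimple rho := by
  refine isFaceLabelling_dartLabel.dualSimple
    (fun d => faceLabel_ne_faceLabel_swap d.fst d.snd d.adj) fun d d' h₁ h₂ => ?_
  obtain ⟨m, hm, hdm⟩ := exists_facePair_iterate_faceRep_eq d.fst d.snd d.adj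
  obtain ⟨n, hn, hdn⟩ := exists_facePair_iterate_faceRep_eq d'.fst d'.snd d'.adj
  change facePair^[m] (faceRep (dartLabel d)) = d.toProd at hdm
  change facePair^[n] (faceRep (dartLabel d')) = d'.toProd at hdn
  rw [← h₁] at hdn
  refine Dart.ext _ _ ?_
  rw [← hdm, ← hdn]
  exact facePair_iterate_eq_of_faceLabel_swap_eq _ m hm n hn (by rw [hdm, hdn]; exact h₂)

theorem isCutface_rho : IsCutface rho (dartLabel ⁻¹' {75}) :=
  isFaceLabelling_dartLabel.isCutface dartLabel_surjective {i | 77 ≤ i}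
    (fun d => le_faceLabel_iff_le_faceLabel_swap d.fst d.snd d.adj) (i := 78) (j := 0)
    (by decide) (by decide) (by decide) (by decide)

end K17

open DualSep in
/-- There is a rotation system on `K_{17}` with 85 faces of the stated lengths, simple
dual, whose face of length 17 is a cutface; its genus is 18 = γ(K_{17}) + 2. -/
theorem stmt_K17 :
    ∃ ρ : Equiv.Perm (⊤ : SimpleGraph (Fin 17)).Dart,
      IsRotationSystem ⊤ ρ ∧
      (faces ρ).ncard = 85 ∧
      {F ∈ faces ρ | F.ncard = 3}.ncard = 83 ∧
      {F ∈ faces ρ | F.ncard = 6}.ncard = 1 ∧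
      {F ∈ faces ρ | F.ncard = 17}.ncard = 1 ∧
      DualSimple ρ ∧
      (∃ C ∈ faces ρ, C.ncard = 17 ∧ IsCutface ρ C) ∧
      ((Fintype.card (Fin 17) : ℤ) - ((⊤ : SimpleGraph (Fin 17)).edgeSet.ncard : ℤ)
          + ((faces ρ).ncard : ℤ) = 2 - 2 * 18) := by
  have hfaces : (faces K17.rho).ncard = 85 := by
    rw [K17.isFaceLabelling_dartLabel.ncard_faces K17.dartLabel_surjective, Nat.card_eq_fintype_card,
      Fintype.card_fin]
  have hedges : (⊤ : SimpleGraph (Fin 17)).edgeSet.ncard = 136 := by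
    rw [← SimpleGraph.coe_edgeFinset, Set.ncard_coe_finset,
      SimpleGraph.card_edgeFinset_top_eq_card_choose_two]
    rfl
  refine ⟨K17.rho, isRotationSystem_rotationOfCyclicOrders _ _ K17.nodup_rot, hfaces,
    by rw [K17.ncard_faces_ncard_eq]; decide, by rw [K17.ncard_faces_ncard_eq]; decide,
    by rw [K17.ncard_faces_ncard_eq]; decide, K17.dualSimple_rho,
    ⟨_, K17.isCutface_rho.1, by rw [K17.ncard_dartLabel_preimage]; decide, K17.isCutface_rho⟩, ?_⟩
  rw [hfaces, hedges]
  rfl
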